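/- (Transformer Filter approximates the Kalman Filter) Let the Kalman Filter generate x̂*_t = (A − LC) x̂*_{t−1} + L y_{t−1} with x̂*_0 = x_0, and let the Transformer Filter generate x̂_t = Σ_{i=t−H+1}^{t} α_{i,t} x̃_i, where x̃_i = (A − LC) x̂_{i−1} + L y_{i−1} (with x̂_0 = x̃_0 = x_0 and x̂_i, y_i = 0 for i < 0), and α_{i,t} = exp(−β‖x̃_i − x̃_t‖²) / Σ_{j=t−H+1}^{t} exp(−β‖x̃_j − x̃_t‖²). Suppose A − LC = MθM^{−1} with ‖θ‖ < 1, and let κ = ‖M‖‖M^{−1}‖. Then for every ε > 0, if β ≥ H²κ² / (2e(1−‖θ‖)²ε²), we have ‖x̂_t − x̂*_t‖ ≤ ε for all t ≥ 0. -/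

import Mathlib

/-!
Write `e_t = x̂_t − x̂*_t`. Subtracting the two recursions gives
`e_t = (x̂_t − x̃_t) + (A − LC) e_{t−1}`, so the Transformer Filter is the Kalman Filter driven by
the attention error `x̂_t − x̃_t`. Since the query `x̃_t` lies in its own window, that error is a
softmax average of the offsets `x̃_i − x̃_t`, each weighted by at most `exp (−β d²)` with
`d = ‖x̃_i − x̃_t‖`; as `d exp (−β d²) ≤ 1 / √(2eβ)`, the error is at most `H / √(2eβ)`.
In the coordinates `M⁻¹ e_t` the recursion contracts by `‖θ‖`, which bounds `‖e_t‖` by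
`κ H / ((1 − ‖θ‖) √(2eβ))`, and the choice of `β` makes this at most `ε`.
-/

open Finset Real

theorem exp_neg_mul_sq_mul_le {β c : ℝ} (hc : 0 ≤ c) (hβc : 1 ≤ 2 * β * exp 1 * c ^ 2) (d : ℝ) :
    exp (-β * d ^ 2) * d ≤ c := by
  have hβ : 0 < 2 * β * exp 1 := by
    by_contra! h
    nlinarith [sq_nonneg c]
  have hsq : (exp (-β * d ^ 2) * d) ^ 2 * (2 * β * exp 1) ≤ 1 := by
    have h := mul_exp_neg_le_exp_neg_one (2 * β * d ^ 2)
    have hexp : exp (-β * d ^ 2) ^ 2 = exp (-(2 * β * d ^ 2)) := by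
      rw [← exp_nat_mul]; ring_nf
    calc (exp (-β * d ^ 2) * d) ^ 2 * (2 * β * exp 1)
        = 2 * β * d ^ 2 * exp (-(2 * β * d ^ 2)) * exp 1 := by rw [mul_pow, hexp]; ring
      _ ≤ exp (-1) * exp 1 := by gcongr
      _ = 1 := by rw [← exp_add]; simp
  refine (le_abs_self _).trans (abs_le_of_sq_le_sq ?_ hc)
  nlinarith

section GaussianAttention

variable {ι E : Type*} [NormedAddCommGroup E]

theorem one_le_sum_exp_neg_mul_sq {β : ℝ} {s : Finset ι} {x : ι → E} {t : ι} (ht : t ∈ s) :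
    1 ≤ ∑ j ∈ s, exp (-β * ‖x j - x t‖ ^ 2) := by
  calc (1 : ℝ) = exp (-β * ‖x t - x t‖ ^ 2) := by simp
    _ ≤ _ := single_le_sum (f := fun j => exp (-β * ‖x j - x t‖ ^ 2))
        (fun j _ => (exp_pos _).le) ht

variable [NormedSpace ℝ E]

noncomputable def gaussianAttention (β : ℝ) (s : Finset ι) (x : ι → E) (t : ι) : E :=
  ∑ i ∈ s, (exp (-β * ‖x i - x t‖ ^ 2) / ∑ j ∈ s, exp (-β * ‖x j - x t‖ ^ 2)) • x i

theorem norm_gaussianAttention_sub_le {β c : ℝ} {s : Finset ι} {x : ι → E} {t : ι} (ht : t ∈ s)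
    (hc : ∀ d : ℝ, exp (-β * d ^ 2) * d ≤ c) :
    ‖gaussianAttention β s x t - x t‖ ≤ #s * c := by
  set S := ∑ j ∈ s, exp (-β * ‖x j - x t‖ ^ 2)
  have hS : 1 ≤ S := one_le_sum_exp_neg_mul_sq ht
  have hS0 : 0 < S := one_pos.trans_le hS
  have hw : ∑ i ∈ s, exp (-β * ‖x i - x t‖ ^ 2) / S = 1 := by
    rw [← sum_div, div_self hS0.ne']
  have hdev : gaussianAttention β s x t - x t =
      ∑ i ∈ s, (exp (-β * ‖x i - x t‖ ^ 2) / S) • (x i - x t) := by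
    simp only [smul_sub, sum_sub_distrib, ← sum_smul, hw, one_smul]
    rfl
  calc ‖gaussianAttention β s x t - x t‖
      ≤ ∑ i ∈ s, ‖(exp (-β * ‖x i - x t‖ ^ 2) / S) • (x i - x t)‖ := hdev ▸ norm_sum_le _ _
    _ ≤ ∑ _i ∈ s, c := by
        refine sum_le_sum fun i _ => ?_
        rw [norm_smul, norm_of_nonneg (by positivity)]
        calc exp (-β * ‖x i - x t‖ ^ 2) / S * ‖x i - x t‖
            ≤ exp (-β * ‖x i - x t‖ ^ 2) * ‖x i - x t‖ := by
              gcongr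
              exact div_le_self (exp_pos _).le hS
          _ ≤ c := hc _
    _ = #s * c := by rw [sum_const, nsmul_eq_mul]

end GaussianAttention

theorem le_div_one_sub_of_le_mul_add {a : ℕ → ℝ} {q b : ℝ} (hq0 : 0 ≤ q) (hq1 : q < 1)
    (h0 : a 0 ≤ b / (1 - q)) (hstep : ∀ k, a (k + 1) ≤ q * a k + b) (k : ℕ) :
    a k ≤ b / (1 - q) := by
  induction k with
  | zero => exact h0
  | succ k ih =>
    have h1q : 0 < 1 - q := by linarith
    calc a (k + 1) ≤ q * (b / (1 - q)) + b := (hstep k).trans (by gcongr)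
      _ = b / (1 - q) := by field_simp; ring

theorem norm_le_of_eq_conj_contraction {𝕜 E F : Type*} [NontriviallyNormedField 𝕜]
    [NormedAddCommGroup E] [NormedSpace 𝕜 E] [NormedAddCommGroup F] [NormedSpace 𝕜 F]
    {T : E →L[𝕜] E} (M : F ≃L[𝕜] E) {θ : F →L[𝕜] F}
    (hT : T = (M : F →L[𝕜] E).comp (θ.comp (M.symm : E →L[𝕜] F))) (hθ : ‖θ‖ < 1)
    {e δ : ℕ → E} {D : ℝ} (he0 : e 0 = 0) (he : ∀ k, e (k + 1) = δ k + T (e k))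
    (hδ : ∀ k, ‖δ k‖ ≤ D) (k : ℕ) :
    ‖e k‖ ≤ ‖(M : F →L[𝕜] E)‖ * ‖(M.symm : E →L[𝕜] F)‖ * D / (1 - ‖θ‖) := by
  have hD : 0 ≤ D := (norm_nonneg _).trans (hδ 0)
  have hconj : ∀ v, M.symm (T v) = θ (M.symm v) := by simp [hT]
  have hcoord : ‖M.symm (e k)‖ ≤ ‖(M.symm : E →L[𝕜] F)‖ * D / (1 - ‖θ‖) := by
    refine le_div_one_sub_of_le_mul_add (a := fun k => ‖M.symm (e k)‖) (norm_nonneg _) hθ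
      ?_ (fun k => ?_) k
    · have : 0 < 1 - ‖θ‖ := by linarith
      simp only [he0, map_zero, norm_zero]
      positivity
    · rw [he, map_add, hconj, add_comm]
      refine (norm_add_le _ _).trans (add_le_add (θ.le_opNorm _) ?_)
      exact ((M.symm : E →L[𝕜] F).le_opNorm _).trans (by gcongr; exact hδ k)
  calc ‖e k‖ = ‖(M : F →L[𝕜] E) (M.symm (e k))‖ := by simp
    _ ≤ ‖(M : F →L[𝕜] E)‖ * (‖(M.symm : E →L[𝕜] F)‖ * D / (1 - ‖θ‖)) :=
        ((M : F →L[𝕜] E).le_opNorm _).trans (by gcongr)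
    _ = _ := by ring

open Finset in
theorem stmt8_general {n p : ℕ}
    (A : EuclideanSpace ℝ (Fin n) →L[ℝ] EuclideanSpace ℝ (Fin n))
    (C : EuclideanSpace ℝ (Fin n) →L[ℝ] EuclideanSpace ℝ (Fin p))
    (L : EuclideanSpace ℝ (Fin p) →L[ℝ] EuclideanSpace ℝ (Fin n))
    (M : EuclideanSpace ℝ (Fin n) ≃L[ℝ] EuclideanSpace ℝ (Fin n))
    (θ : EuclideanSpace ℝ (Fin n) →L[ℝ] EuclideanSpace ℝ (Fin n))
    (hF : A - L.comp C =
      (M : EuclideanSpace ℝ (Fin n) →L[ℝ] EuclideanSpace ℝ (Fin n)).comp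
        (θ.comp (M.symm : EuclideanSpace ℝ (Fin n) →L[ℝ] EuclideanSpace ℝ (Fin n))))
    (hθ : ‖θ‖ < 1)
    (κ : ℝ)
    (hκ : κ = ‖(M : EuclideanSpace ℝ (Fin n) →L[ℝ] EuclideanSpace ℝ (Fin n))‖ *
        ‖(M.symm : EuclideanSpace ℝ (Fin n) →L[ℝ] EuclideanSpace ℝ (Fin n))‖)
    (H : ℕ) (hH : 1 ≤ H) (β : ℝ)
    (x0 : EuclideanSpace ℝ (Fin n))
    (y : ℤ → EuclideanSpace ℝ (Fin p))
    (xstar xtilde xhat : ℤ → EuclideanSpace ℝ (Fin n))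
    -- initializations
    (hstar0 : xstar 0 = x0) (hhat0 : xhat 0 = x0)
    -- Kalman Filter recursion
    (hstar : ∀ t : ℤ, 1 ≤ t → xstar t = (A - L.comp C) (xstar (t - 1)) + L (y (t - 1)))
    -- interpolating estimates
    (htilde : ∀ i : ℤ, 1 ≤ i → xtilde i = (A - L.comp C) (xhat (i - 1)) + L (y (i - 1)))
    -- Transformer Filter: softmax-weighted average over the window of length `H`
    (hhat : ∀ t : ℤ, 1 ≤ t →
      xhat t = ∑ i ∈ Icc (t - (H : ℤ) + 1) t,
        (Real.exp (-β * ‖xtilde i - xtilde t‖ ^ 2) /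
          ∑ j ∈ Icc (t - (H : ℤ) + 1) t, Real.exp (-β * ‖xtilde j - xtilde t‖ ^ 2)) •
          xtilde i)
    (ε : ℝ) (hε : 0 < ε)
    (hβ : β ≥ (H : ℝ) ^ 2 * κ ^ 2 / (2 * Real.exp 1 * (1 - ‖θ‖) ^ 2 * ε ^ 2)) :
    ∀ t : ℤ, 0 ≤ t → ‖xhat t - xstar t‖ ≤ ε := by
  intro t ht
  lift t to ℕ using ht
  rcases subsingleton_or_nontrivial (EuclideanSpace ℝ (Fin n)) with hE | hE
  · simpa [Subsingleton.elim (xhat t - xstar t) 0] using hε.le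
  have hκ1 : 1 ≤ κ := hκ ▸ M.one_le_norm_mul_norm_symm
  have hHκ : 0 < (H : ℝ) * κ := mul_pos (by exact_mod_cast hH) (by linarith)
  have h1θ : 0 < 1 - ‖θ‖ := by linarith
  set c := (1 - ‖θ‖) * ε / (H * κ) with hc
  have hβc : 1 ≤ 2 * β * exp 1 * c ^ 2 := by
    rw [ge_iff_le, div_le_iff₀ (by positivity)] at hβ
    rw [hc, div_pow, ← mul_div_assoc, one_le_div (by positivity)]
    linarith
  have hattn : ∀ t : ℤ, 1 ≤ t → ‖xhat t - xtilde t‖ ≤ H * c := by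
    intro t ht
    have hmem : t ∈ Icc (t - H + 1) t := by simp only [mem_Icc]; omega
    have hcard : #(Icc (t - H + 1) t) = H := by simp [Int.card_Icc]
    have hxhat : xhat t = gaussianAttention β (Icc (t - H + 1) t) xtilde t := hhat t ht
    simpa only [hxhat, hcard] using
      norm_gaussianAttention_sub_le hmem (exp_neg_mul_sq_mul_le (by positivity) hβc)
  have hstep : ∀ k : ℕ, xhat ↑(k + 1) - xstar ↑(k + 1) =
      (xhat ↑(k + 1) - xtilde ↑(k + 1)) + (A - L.comp C) (xhat k - xstar k) := by
    intro k
    rw [htilde _ (by omega), hstar _ (by omega), Nat.cast_succ, add_sub_cancel_right, map_sub]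
    abel
  have herr := norm_le_of_eq_conj_contraction M hF hθ (e := fun k : ℕ => xhat k - xstar k)
    (by simp [hhat0, hstar0]) hstep (fun k => hattn _ (by omega)) t
  calc ‖xhat t - xstar t‖ ≤ κ * (H * c) / (1 - ‖θ‖) := hκ ▸ herr
    _ = ε := by rw [hc]; field_simp

open Finset in
/-- The Transformer Filter approximates the Kalman Filter: with Gaussian softmax weights
of temperature `β ≥ H²κ²/(2e(1−‖θ‖)²ε²)`, the Transformer Filter estimates stay
`ε`-close to the Kalman Filter estimates, uniformly in time. -/
theorem stmt8 {n p : ℕ}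
    (A : EuclideanSpace ℝ (Fin n) →L[ℝ] EuclideanSpace ℝ (Fin n))
    (C : EuclideanSpace ℝ (Fin n) →L[ℝ] EuclideanSpace ℝ (Fin p))
    (L : EuclideanSpace ℝ (Fin p) →L[ℝ] EuclideanSpace ℝ (Fin n))
    (M : EuclideanSpace ℝ (Fin n) ≃L[ℝ] EuclideanSpace ℝ (Fin n))
    (θ : EuclideanSpace ℝ (Fin n) →L[ℝ] EuclideanSpace ℝ (Fin n))
    (hF : A - L.comp C =
      (M : EuclideanSpace ℝ (Fin n) →L[ℝ] EuclideanSpace ℝ (Fin n)).comp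
        (θ.comp (M.symm : EuclideanSpace ℝ (Fin n) →L[ℝ] EuclideanSpace ℝ (Fin n))))
    (hθ : ‖θ‖ < 1)
    (κ : ℝ)
    (hκ : κ = ‖(M : EuclideanSpace ℝ (Fin n) →L[ℝ] EuclideanSpace ℝ (Fin n))‖ *
        ‖(M.symm : EuclideanSpace ℝ (Fin n) →L[ℝ] EuclideanSpace ℝ (Fin n))‖)
    (H : ℕ) (hH : 1 ≤ H) (β : ℝ)
    (x0 : EuclideanSpace ℝ (Fin n))
    (y : ℤ → EuclideanSpace ℝ (Fin p))
    (xstar xtilde xhat : ℤ → EuclideanSpace ℝ (Fin n))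
    -- convention: `x̂_i = 0` and `y_i = 0` for `i < 0`, hence also `x̃_i = 0` for `i < 0`
    (hyneg : ∀ i : ℤ, i < 0 → y i = 0)
    (hhatneg : ∀ i : ℤ, i < 0 → xhat i = 0)
    (htildeneg : ∀ i : ℤ, i < 0 → xtilde i = 0)
    -- initializations
    (hstar0 : xstar 0 = x0) (hhat0 : xhat 0 = x0) (htilde0 : xtilde 0 = x0)
    -- Kalman Filter recursion
    (hstar : ∀ t : ℤ, 1 ≤ t → xstar t = (A - L.comp C) (xstar (t - 1)) + L (y (t - 1)))
    -- interpolating estimates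
    (htilde : ∀ i : ℤ, 1 ≤ i → xtilde i = (A - L.comp C) (xhat (i - 1)) + L (y (i - 1)))
    -- Transformer Filter: softmax-weighted average over the window of length `H`
    (hhat : ∀ t : ℤ, 1 ≤ t →
      xhat t = ∑ i ∈ Icc (t - (H : ℤ) + 1) t,
        (Real.exp (-β * ‖xtilde i - xtilde t‖ ^ 2) /
          ∑ j ∈ Icc (t - (H : ℤ) + 1) t, Real.exp (-β * ‖xtilde j - xtilde t‖ ^ 2)) •
          xtilde i)
    (ε : ℝ) (hε : 0 < ε)
    (hβ : β ≥ (H : ℝ) ^ 2 * κ ^ 2 / (2 * Real.exp 1 * (1 - ‖θ‖) ^ 2 * ε ^ 2)) :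
    ∀ t : ℤ, 0 ≤ t → ‖xhat t - xstar t‖ ≤ ε :=
  stmt8_general A C L M θ hF hθ κ hκ H hH β x0 y xstar xtilde xhat hstar0 hhat0 hstar htilde hhat ε
    hε hβ
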